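/- Fix reals i, j > 0 with i + j = 1 and let x ∈ Bad(i,j) be irrational. Then for every strictly positive non-increasing ψ : ℕ → ℝ with ∑_{r=1}^∞ ψ(r) = ∞, the set W^x_{(i,j)}(ψ) has 2-dimensional Lebesgue measure equal to 1. -/

import Mathlib

open MeasureTheory Set Filter

/-- Distance to the nearest integer. -/
noncomputable def nint (y : ℝ) : ℝ := |y - (round y : ℝ)|

/-- `pw y e = y ^ (1/e)`, with the convention that `y ^ (1/0) = 0`. -/
noncomputable def pw (y e : ℝ) : ℝ := if e = 0 then 0 else y ^ (1 / e)

/-- A vector is irrational if `1, x₁, x₂` are linearly independent over `ℚ`. -/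
def IrrVec (x : ℝ × ℝ) : Prop :=
  ∀ a b c : ℤ, (a : ℝ) * x.1 + (b : ℝ) * x.2 + (c : ℝ) = 0 → a = 0 ∧ b = 0 ∧ c = 0

/-- The set `Bad(i,j)` of `(i,j)`-badly approximable vectors. -/
def Badij (i j : ℝ) (x : ℝ × ℝ) : Prop :=
  IrrVec x ∧ ∃ c > (0 : ℝ), ∀ q : ℕ, 0 < q →
    max (pw (nint (q * x.1)) i) (pw (nint (q * x.2)) j) > c / q

/-- The twisted well-approximable set `W^x_{(i,j)}(ψ)`. -/
def twistedW (x : ℝ × ℝ) (i j : ℝ) (ψ : ℕ → ℝ) : Set (ℝ × ℝ) :=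
  {γ ∈ Set.Icc (0 : ℝ × ℝ) 1 |
    {q : ℤ | q ≠ 0 ∧
      max (pw (nint (q * x.1 - γ.1)) i) (pw (nint (q * x.2 - γ.2)) j)
        ≤ ψ q.natAbs}.Infinite}

/-!
On the torus `𝕋² = ℝ²/ℤ²` the set `W` is, up to the projection, the limsup of the "rectangles"
`A_q = {γ : max(‖q x₁ - γ₁‖^{1/i}, ‖q x₂ - γ₂‖^{1/j}) ≤ ψ(q)}`, whose measure is `4 ψ(q)` because
`i + j = 1` (once `ψ` is capped). If `A_q` meets both `A_a` and `A_b` with `q ≤ a < b`, the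
quasi-triangle inequality of this weighted norm bounds the weighted norm of `(b - a) x` by a
multiple of `ψ(q)`, so badness of `x` forces `b - a ≫ 1 / ψ(q)`. As `ψ` is non-increasing, this
gives `∑_{q, r} |A_q ∩ A_r| ≪ (∑_q |A_q|)²` over every block `[M, N)` with `∑ |A_q| ≥ 1`, and the
second moment method (Kochen–Stone) gives `|limsup A_q| > 0`. Finally `limsup A_q` is invariant
under the rotation `γ ↦ γ - x`, which is ergodic by Kronecker's theorem, so its measure is `1`.
-/

open scoped Topology ENNReal

local notation "𝕋²" => UnitAddCircle × UnitAddCircle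

theorem Antitone.natCast_sub_mul_le_sum_Ico {g : ℕ → ℝ≥0∞} (hg : Antitone g) {a b : ℕ} :
    ((b - a : ℕ) : ℝ≥0∞) * g b ≤ ∑ s ∈ Finset.Ico a b, g s := by
  simpa [nsmul_eq_mul] using Finset.card_nsmul_le_sum (Finset.Ico a b) g (g b)
    fun s hs => hg (Finset.mem_Ico.1 hs).2.le

/-- Each `b ∈ S` is charged to the integers between its predecessor in `insert q S` and `b`. -/
theorem Antitone.mul_sum_le_sum_Ico_of_gap {g : ℕ → ℝ≥0∞} (hg : Antitone g) {D : ℝ≥0∞} {N : ℕ}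
    (S : Finset ℕ) : ∀ q : ℕ, (∀ b ∈ S, q < b ∧ b ≤ N) →
      (∀ a ∈ insert q S, ∀ b ∈ S, a < b → D ≤ ((b - a : ℕ) : ℝ≥0∞)) →
      D * ∑ b ∈ S, g b ≤ ∑ s ∈ Finset.Ico q N, g s := by
  induction S using Finset.induction_on_min with
  | empty => simp
  | insert a S ha ih =>
    intro q hS hgap
    have haS : a ∉ S := fun h => lt_irrefl a (ha a h)
    obtain ⟨hqa, haN⟩ := hS a (Finset.mem_insert_self a S)
    have hhead : D * g a ≤ ∑ s ∈ Finset.Ico q a, g s :=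
      (mul_le_mul_left (hgap q (Finset.mem_insert_self _ _) a (Finset.mem_insert_self _ _) hqa)
        _).trans hg.natCast_sub_mul_le_sum_Ico
    have htail : D * ∑ b ∈ S, g b ≤ ∑ s ∈ Finset.Ico a N, g s :=
      ih a (fun b hb => ⟨ha b hb, (hS b (Finset.mem_insert_of_mem hb)).2⟩)
        fun c hc b hb => hgap c (Finset.mem_insert_of_mem hc) b (Finset.mem_insert_of_mem hb)
    rw [Finset.sum_insert haS, mul_add, ← Finset.sum_Ico_consecutive g hqa.le haN]
    exact add_le_add hhead htail

theorem ENNReal.sum_sum_le_two_mul_sum_sum_le {ι : Type*} [LinearOrder ι] (s : Finset ι)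
    {f : ι → ι → ℝ≥0∞} (hf : ∀ q r, f q r = f r q) :
    ∑ q ∈ s, ∑ r ∈ s, f q r ≤ 2 * ∑ q ∈ s, ∑ r ∈ s with q ≤ r, f q r := by
  let g : ι → ι → ℝ≥0∞ := fun q r => if q ≤ r then f q r else 0
  calc ∑ q ∈ s, ∑ r ∈ s, f q r ≤ ∑ q ∈ s, ∑ r ∈ s, (g q r + g r q) := by
        gcongr with q _ r _
        rcases le_total q r with h | h
        · simp [g, h]
        · simp [g, h, hf q r]
    _ = 2 * ∑ q ∈ s, ∑ r ∈ s with q ≤ r, f q r := by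
        have hsymm : ∑ q ∈ s, ∑ r ∈ s, g r q = ∑ q ∈ s, ∑ r ∈ s, g q r := Finset.sum_comm
        simp only [Finset.sum_add_distrib, hsymm, ← two_mul]
        simp only [g, Finset.sum_ite, Finset.sum_const_zero, add_zero]

theorem ENNReal.exists_one_le_sum_Ico {f : ℕ → ℝ≥0∞} (hf : ∑' q, f q = ∞)
    (hfin : ∀ q, f q ≠ ∞) (M : ℕ) : ∃ N, 1 ≤ ∑ q ∈ Finset.Ico M N, f q := by
  have hM : ∑ q ∈ Finset.range M, f q ≠ ∞ := ENNReal.sum_ne_top.2 fun q _ => hfin q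
  have hlim := ENNReal.tendsto_nat_tsum f
  rw [hf] at hlim
  obtain ⟨N, hN, hMN⟩ := ((hlim.eventually_const_lt (ENNReal.add_lt_top.2
    ⟨hM.lt_top, ENNReal.one_lt_top⟩)).and (eventually_ge_atTop M)).exists
  rw [← Finset.sum_range_add_sum_Ico f hMN] at hN
  exact ⟨N, ((ENNReal.add_lt_add_iff_left hM).1 hN).le⟩

section SecondMoment

variable {α : Type*} [MeasurableSpace α] {μ : Measure α} {A : ℕ → Set α}

theorem sq_sum_measure_le_measure_biUnion_mul (hA : ∀ q, MeasurableSet (A q)) (s : Finset ℕ) :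
    (∑ q ∈ s, μ (A q)) ^ 2 ≤ μ (⋃ q ∈ s, A q) * ∑ q ∈ s, ∑ r ∈ s, μ (A q ∩ A r) := by
  set U := ⋃ q ∈ s, A q
  have hU : MeasurableSet U := s.measurableSet_biUnion fun q _ => hA q
  -- Cauchy–Schwarz for `f = ∑ 𝟙_{A q}` and `𝟙_U`, using `f = f * 𝟙_U`
  set f : α → ℝ≥0∞ := fun a => ∑ q ∈ s, (A q).indicator 1 a
  have hf : Measurable f := Finset.measurable_sum s fun q _ => measurable_one.indicator (hA q)
  have hfU : ∀ a, f a * U.indicator 1 a = f a := by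
    intro a
    by_cases ha : a ∈ U
    · simp [ha]
    · have : f a = 0 := Finset.sum_eq_zero fun q hq =>
        indicator_of_notMem (fun h => ha (mem_biUnion hq h)) _
      simp [this]
  have hf1 : ∫⁻ a, f a ∂μ = ∑ q ∈ s, μ (A q) := by
    rw [lintegral_finsetSum _ fun q _ => measurable_one.indicator (hA q)]
    simp [lintegral_indicator (hA _)]
  have hf2 : ∫⁻ a, f a ^ (2 : ℝ) ∂μ = ∑ q ∈ s, ∑ r ∈ s, μ (A q ∩ A r) := by
    have : ∀ a, f a ^ (2 : ℝ) = ∑ q ∈ s, ∑ r ∈ s, (A q ∩ A r).indicator 1 a := fun a => by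
      simp only [ENNReal.rpow_two, sq, f, Finset.sum_mul_sum, inter_indicator_one, Pi.mul_apply]
    simp_rw [this]
    rw [lintegral_finsetSum _ fun q _ => Finset.measurable_sum _ fun r _ =>
      measurable_one.indicator ((hA q).inter (hA r))]
    refine Finset.sum_congr rfl fun q _ => ?_
    rw [lintegral_finsetSum _ fun r _ => measurable_one.indicator ((hA q).inter (hA r))]
    simp [lintegral_indicator ((hA _).inter (hA _))]
  have hU2 : ∫⁻ a, U.indicator 1 a ^ (2 : ℝ) ∂μ = μ U := by
    have : ∀ a, U.indicator (1 : α → ℝ≥0∞) a ^ (2 : ℝ) = U.indicator 1 a := fun a => by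
      by_cases ha : a ∈ U <;> simp [ha]
    simp_rw [this]
    exact lintegral_indicator_one hU
  have holder := ENNReal.lintegral_mul_le_Lp_mul_Lq μ Real.HolderConjugate.two_two
    hf.aemeasurable (measurable_one.indicator hU).aemeasurable
  simp only [Pi.mul_apply, hfU, hf1, hf2, hU2] at holder
  calc (∑ q ∈ s, μ (A q)) ^ 2
      ≤ ((∑ q ∈ s, ∑ r ∈ s, μ (A q ∩ A r)) ^ (1 / 2 : ℝ) * μ U ^ (1 / 2 : ℝ)) ^ 2 := by
        gcongr
    _ = μ U * ∑ q ∈ s, ∑ r ∈ s, μ (A q ∩ A r) := by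
        rw [mul_pow, ← ENNReal.rpow_natCast, ← ENNReal.rpow_natCast (μ U ^ _),
          ← ENNReal.rpow_mul, ← ENNReal.rpow_mul]
        norm_num [mul_comm]

/-- The Kochen–Stone form of the second Borel–Cantelli lemma. -/
theorem inv_le_measure_limsup_of_sum_inter_le [IsFiniteMeasure μ]
    (hA : ∀ q, MeasurableSet (A q)) (hdiv : ∑' q, μ (A q) = ∞) {C : ℝ≥0∞}
    (hC : ∀ M N, 1 ≤ ∑ q ∈ Finset.Ico M N, μ (A q) →
      ∑ q ∈ Finset.Ico M N, ∑ r ∈ Finset.Ico M N, μ (A q ∩ A r) ≤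
        C * (∑ q ∈ Finset.Ico M N, μ (A q)) ^ 2) :
    C⁻¹ ≤ μ (limsup A atTop) := by
  have htail : ∀ M, C⁻¹ ≤ μ (⋃ q ≥ M, A q) := by
    intro M
    obtain ⟨N, hN⟩ := ENNReal.exists_one_le_sum_Ico hdiv (fun q => measure_ne_top μ _) M
    set T := ∑ q ∈ Finset.Ico M N, μ (A q)
    set U := ⋃ q ∈ Finset.Ico M N, A q
    have hT0 : T ^ 2 ≠ 0 := pow_ne_zero 2 (zero_lt_one.trans_le hN).ne'
    have hTtop : T ^ 2 ≠ ∞ :=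
      ENNReal.pow_ne_top (ENNReal.sum_ne_top.2 fun q _ => measure_ne_top μ _)
    have hUC : 1 ≤ μ U * C := by
      refine (ENNReal.mul_le_mul_iff_left hT0 hTtop).1 ?_
      calc 1 * T ^ 2 ≤ μ U * ∑ q ∈ Finset.Ico M N, ∑ r ∈ Finset.Ico M N, μ (A q ∩ A r) := by
            simpa using sq_sum_measure_le_measure_biUnion_mul hA _
        _ ≤ μ U * C * T ^ 2 := by rw [mul_assoc]; gcongr; exact hC M N hN
    calc C⁻¹ ≤ μ U := (ENNReal.inv_le_iff_le_mul (fun h => absurd h (measure_ne_top _ _))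
          fun _ hU => by simp [hU] at hUC).2 (mul_comm (μ U) C ▸ hUC)
      _ ≤ μ (⋃ q ≥ M, A q) := measure_mono <| iUnion₂_subset fun q hq =>
          subset_biUnion_of_mem (u := A) (Finset.mem_Ico.1 hq).1
  rw [limsup_eq_iInf_iSup_of_nat]
  simp only [iSup_eq_iUnion, iInf_eq_iInter]
  rw [Antitone.measure_iInter (s := fun M => ⋃ q ≥ M, A q)
    (fun M M' h => biUnion_subset_biUnion_left fun q hq => h.trans hq)
    (fun M => (MeasurableSet.biUnion (to_countable _) fun q _ => hA q).nullMeasurableSet)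
    ⟨0, measure_ne_top μ _⟩]
  exact le_iInf htail

end SecondMoment

theorem Ergodic.measure_eq_one_of_subset_preimage {α : Type*} [MeasurableSpace α]
    {μ : Measure α} [IsProbabilityMeasure μ] {f : α → α} (hf : Ergodic f μ) {s : Set α}
    (hs : NullMeasurableSet s μ) (hsf : s ⊆ f ⁻¹' s) (h0 : μ s ≠ 0) : μ s = 1 := by
  rcases hf.ae_empty_or_univ_of_ae_le_preimage hs hsf.eventuallyLE with h | h
  · exact absurd (by rw [measure_congr h, measure_empty]) h0
  · rw [measure_congr h, measure_univ]

theorem limsup_subset_preimage_limsup {α : Type*} {A : ℕ → Set α} {f : α → α}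
    (h : ∀ q, A (q + 1) ⊆ f ⁻¹' A q) : limsup A atTop ⊆ f ⁻¹' limsup A atTop := by
  intro γ hγ
  rw [mem_preimage, mem_limsup_iff_frequently_mem] at *
  refine (tendsto_sub_atTop_nat 1).frequently_map _ (fun q ⟨hq, h1⟩ => ?_)
    (hγ.and_eventually (eventually_ge_atTop 1))
  exact h (q - 1) (by rwa [Nat.sub_add_cancel h1])

section

variable {E : Type*} [NormedAddCommGroup E] [ProperSpace E]

theorem AddSubgroup.exists_tendsto_zero_of_injective (G : AddSubgroup E) {u : ℕ → E}
    (hu : Function.Injective u) (huG : ∀ n, u n ∈ G) (hbdd : Bornology.IsBounded (range u)) :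
    ∃ g : ℕ → E, (∀ n, g n ∈ G) ∧ (∀ n, g n ≠ 0) ∧ Tendsto g atTop (𝓝 0) := by
  obtain ⟨a, -, σ, hσ, hlim⟩ :=
    (Metric.isCompact_of_isClosed_isBounded isClosed_closure hbdd.closure).tendsto_subseq
      fun n => _root_.subset_closure (mem_range_self n)
  refine ⟨fun n => u (σ (n + 1)) - u (σ n), fun n => sub_mem (huG _) (huG _),
    fun n => sub_ne_zero.2 (hu.ne (hσ.injective.ne n.succ_ne_self)), ?_⟩
  simpa using (hlim.comp (tendsto_add_atTop_nat 1)).sub hlim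

theorem AddSubgroup.exists_forall_smul_mem_topologicalClosure [NormedSpace ℝ E]
    (G : AddSubgroup E) {g : ℕ → E} (hgG : ∀ n, g n ∈ G) (hg0 : ∀ n, g n ≠ 0)
    (hg : Tendsto g atTop (𝓝 0)) :
    ∃ w : E, w ≠ 0 ∧ ∀ t : ℝ, t • w ∈ G.topologicalClosure := by
  have hsphere : ∀ n, ‖g n‖⁻¹ • g n ∈ Metric.sphere (0 : E) 1 := fun n => by
    simp [norm_smul, hg0 n]
  obtain ⟨w, hw, σ, hσ, hlim⟩ := (isCompact_sphere (0 : E) 1).tendsto_subseq hsphere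
  refine ⟨w, ne_zero_of_mem_sphere one_ne_zero ⟨w, hw⟩, fun t => ?_⟩
  set r : ℕ → ℝ := fun n => ‖g (σ n)‖
  have hr0 : ∀ n, 0 < r n := fun n => norm_pos_iff.2 (hg0 _)
  have hr : Tendsto r atTop (𝓝 0) := by
    simpa using (hg.comp hσ.tendsto_atTop).norm
  have hscale : Tendsto (fun n => (⌊t / r n⌋ : ℝ) * r n) atTop (𝓝 t) := by
    refine tendsto_of_tendsto_of_tendsto_of_le_of_le (g := fun n => t - r n) (h := fun _ => t)
      (by simpa using tendsto_const_nhds.sub hr) tendsto_const_nhds (fun n => ?_) (fun n => ?_)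
    · have := Int.lt_floor_add_one (t / r n)
      rw [div_lt_iff₀ (hr0 n)] at this
      linarith
    · exact (le_div_iff₀ (hr0 n)).1 (Int.floor_le _)
  refine G.isClosed_topologicalClosure.mem_of_tendsto (hscale.smul hlim)
    (Eventually.of_forall fun n => ?_)
  change ((⌊t / r n⌋ : ℝ) * r n) • ((r n)⁻¹ • g (σ n)) ∈ G.topologicalClosure
  rw [smul_smul, mul_assoc, mul_inv_cancel₀ (hr0 n).ne', mul_one, Int.cast_smul_eq_zsmul]
  exact zsmul_mem (G.le_topologicalClosure (hgG _)) _

end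

theorem AddSubgroup.eq_top_of_forall_smul_mem {C : AddSubgroup (ℝ × ℝ)}
    (hC : IsClosed (C : Set (ℝ × ℝ))) {w : ℝ × ℝ} (hw : w ≠ 0) (hline : ∀ t : ℝ, t • w ∈ C)
    (h10 : ((1 : ℝ), (0 : ℝ)) ∈ C) (h01 : ((0 : ℝ), (1 : ℝ)) ∈ C) {x : ℝ × ℝ} (hx : IrrVec x)
    (hxC : x ∈ C) : C = ⊤ := by
  -- the projection along `w`, whose kernel is the line `ℝ w ⊆ C`
  let π : ℝ × ℝ →ₗ[ℝ] ℝ := w.2 • LinearMap.fst ℝ ℝ ℝ - w.1 • LinearMap.snd ℝ ℝ ℝ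
  have hπ : ∀ p, π p = w.2 * p.1 - w.1 * p.2 := fun p => rfl
  have hw2 : w.1 ^ 2 + w.2 ^ 2 ≠ 0 := by
    intro h0
    obtain ⟨h1, h2⟩ := (add_eq_zero_iff_of_nonneg (sq_nonneg _) (sq_nonneg _)).1 h0
    exact hw (Prod.ext (pow_eq_zero_iff two_ne_zero |>.1 h1)
      (pow_eq_zero_iff two_ne_zero |>.1 h2))
  have hker : ∀ p, π p = 0 → p ∈ C := by
    intro p hp
    rw [hπ] at hp
    convert hline ((w.1 * p.1 + w.2 * p.2) / (w.1 ^ 2 + w.2 ^ 2)) using 1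
    ext <;> simp <;> field_simp
    · linear_combination w.2 * hp
    · linear_combination (-w.1) * hp
  have hπ0 : π ≠ 0 := fun h => hw2 <| by
    have := LinearMap.congr_fun h (w.2, -w.1)
    simp only [hπ, LinearMap.zero_apply] at this
    linear_combination this
  have hdense : Dense ((C.map π.toAddMonoidHom : AddSubgroup ℝ) : Set ℝ) := by
    refine Dense.mono (s₁ := AddSubgroup.closure {w.2, -w.1, π x})
      (SetLike.coe_subset_coe.2 ?_) ?_
    · rw [AddSubgroup.closure_le]
      rintro _ (rfl | rfl | rfl)
      · exact ⟨_, h10, by simp [hπ]⟩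
      · exact ⟨_, h01, by simp [hπ]⟩
      · exact ⟨_, hxC, rfl⟩
    rcases AddSubgroup.dense_or_cyclic (AddSubgroup.closure {w.2, -w.1, π x}) with h | ⟨α, hα⟩
    · exact h
    have hmem : ∀ y ∈ ({w.2, -w.1, π x} : Set ℝ), ∃ n : ℤ, y = n * α := fun y hy => by
      obtain ⟨n, hn⟩ := AddSubgroup.mem_closure_singleton.1
        (hα ▸ AddSubgroup.subset_closure hy)
      exact ⟨n, by rw [← hn, zsmul_eq_mul]⟩
    obtain ⟨n₁, h₁⟩ := hmem w.2 (by simp)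
    obtain ⟨n₂, h₂⟩ := hmem (-w.1) (by simp)
    obtain ⟨n₃, h₃⟩ := hmem (π x) (by simp)
    have hα0 : α ≠ 0 := by
      rintro rfl
      exact hw (Prod.ext (by simpa using h₂) (by simpa using h₁))
    obtain ⟨hn₁, hn₂, -⟩ := hx n₁ n₂ (-n₃) (by
      apply mul_left_cancel₀ hα0
      rw [hπ] at h₃
      push_cast
      linear_combination h₃ - x.1 * h₁ - x.2 * h₂)
    exact absurd (Prod.ext (by simpa [hn₂] using h₂) (by simpa [hn₁] using h₁)) hw
  -- `C` is a union of fibres of the open map `π`, and `π '' C` is dense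
  refine eq_top_iff.2 fun p _ => by_contra fun hp => ?_
  obtain ⟨_, ⟨c', hc', rfl⟩, c, hc, hcc'⟩ := hdense.inter_open_nonempty _
    (LinearMap.isOpenMap_of_finiteDimensional π (LinearMap.surjective_of_ne_zero hπ0) _
      hC.isOpen_compl) ⟨π p, p, hp, rfl⟩
  have : c' - c ∈ C := hker _ (by simp [map_sub, ← hcc'])
  exact hc' (by simpa using add_mem this hc)

def toTorus : ℝ × ℝ →+ UnitAddCircle × UnitAddCircle :=
  (QuotientAddGroup.mk' _).prodMap (QuotientAddGroup.mk' _)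

theorem toTorus_apply (p : ℝ × ℝ) :
    toTorus p = ((p.1 : UnitAddCircle), (p.2 : UnitAddCircle)) := rfl

theorem continuous_toTorus : Continuous toTorus :=
  (AddCircle.continuous_mk' 1).prodMap (AddCircle.continuous_mk' 1)

theorem surjective_toTorus : Function.Surjective toTorus :=
  (QuotientAddGroup.mk'_surjective _).prodMap (QuotientAddGroup.mk'_surjective _)

theorem denseRange_zsmul_toTorus {x : ℝ × ℝ} (hx : IrrVec x) :
    DenseRange (fun n : ℤ => n • toTorus x) := by
  let C := (AddSubgroup.zmultiples (toTorus x)).topologicalClosure.comap toTorus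
  have hC : IsClosed (C : Set (ℝ × ℝ)) :=
    (AddSubgroup.isClosed_topologicalClosure _).preimage continuous_toTorus
  have hsub : ∀ p, toTorus p ∈ AddSubgroup.zmultiples (toTorus x) → p ∈ C :=
    fun p hp => AddSubgroup.le_topologicalClosure _ hp
  have hperiod : ∀ p : ℝ × ℝ, toTorus p = 0 → p ∈ C := fun p hp => hsub p (hp ▸ zero_mem _)
  let u : ℕ → ℝ × ℝ := fun n => (Int.fract (n * x.1), Int.fract (n * x.2))
  have hu : Function.Injective u := by
    intro m n hmn
    obtain ⟨z, hz⟩ := Int.fract_eq_fract.1 (congrArg Prod.fst hmn)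
    have := (hx (m - n) 0 (-z) (by push_cast; linear_combination hz)).1
    omega
  have huC : ∀ n, u n ∈ C := fun n => hsub _ <| by
    rw [toTorus_apply]
    simp only [u]
    exact ⟨n, by ext <;> simp [toTorus_apply, ← nsmul_eq_mul]⟩
  have hbdd : Bornology.IsBounded (range u) := by
    refine isBounded_iff_forall_norm_le.2 ⟨1, ?_⟩
    rintro _ ⟨n, rfl⟩
    simp only [u, Prod.norm_def, Real.norm_eq_abs, Int.abs_fract]
    exact max_le (Int.fract_lt_one _).le (Int.fract_lt_one _).le
  obtain ⟨g, hgC, hg0, hg⟩ := C.exists_tendsto_zero_of_injective hu huC hbdd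
  obtain ⟨w, hw, hline⟩ := C.exists_forall_smul_mem_topologicalClosure hgC hg0 hg
  have htop : C = ⊤ := AddSubgroup.eq_top_of_forall_smul_mem hC hw
    (fun t => C.topologicalClosure_minimal le_rfl hC (hline t))
    (hperiod _ (by simp [toTorus_apply])) (hperiod _ (by simp [toTorus_apply])) hx
    (hsub _ (AddSubgroup.mem_zmultiples _))
  intro y
  obtain ⟨p, rfl⟩ := surjective_toTorus y
  have hp : p ∈ C := htop ▸ AddSubgroup.mem_top p
  rwa [← AddSubgroup.coe_zmultiples, ← AddSubgroup.topologicalClosure_coe]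

theorem norm_sub_rpow_le {E : Type*} [SeminormedAddCommGroup E] (a b : E) {p : ℝ} (hp : 0 ≤ p) :
    ‖a - b‖ ^ p ≤ 2 ^ p * max (‖a‖ ^ p) (‖b‖ ^ p) := by
  have hmax : max ‖a‖ ‖b‖ ^ p = max (‖a‖ ^ p) (‖b‖ ^ p) :=
    (Real.monotoneOn_rpow_Ici_of_exponent_nonneg hp).map_max (norm_nonneg _) (norm_nonneg _)
  calc ‖a - b‖ ^ p ≤ (2 * max ‖a‖ ‖b‖) ^ p := by
        gcongr
        linarith [norm_sub_le a b, le_max_left ‖a‖ ‖b‖, le_max_right ‖a‖ ‖b‖]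
    _ = 2 ^ p * max (‖a‖ ^ p) (‖b‖ ^ p) := by
        rw [Real.mul_rpow zero_le_two (le_max_of_le_left (norm_nonneg a)), hmax]

noncomputable def weightedNorm (i j : ℝ) (y : 𝕋²) : ℝ := max (‖y.1‖ ^ (1 / i)) (‖y.2‖ ^ (1 / j))

section WeightedNorm

variable {i j : ℝ}

theorem weightedNorm_le_iff (hi : 0 < i) (hj : 0 < j) {y : 𝕋²} {r : ℝ} (hr : 0 ≤ r) :
    weightedNorm i j y ≤ r ↔ ‖y.1‖ ≤ r ^ i ∧ ‖y.2‖ ≤ r ^ j := by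
  simp only [weightedNorm, max_le_iff, one_div, Real.rpow_inv_le_iff_of_pos (norm_nonneg _) hr hi,
    Real.rpow_inv_le_iff_of_pos (norm_nonneg _) hr hj]

noncomputable def weightedNormConst (i j : ℝ) : ℝ := max (2 ^ (1 / i)) (2 ^ (1 / j))

theorem weightedNormConst_pos : 0 < weightedNormConst i j :=
  lt_max_of_lt_left (Real.rpow_pos_of_pos two_pos _)

theorem weightedNorm_sub_le (hi : 0 < i) (hj : 0 < j) (y z : 𝕋²) :
    weightedNorm i j (y - z) ≤
      weightedNormConst i j * max (weightedNorm i j y) (weightedNorm i j z) := by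
  refine max_le ((norm_sub_rpow_le y.1 z.1 (by positivity)).trans ?_)
    ((norm_sub_rpow_le y.2 z.2 (by positivity)).trans ?_)
  · exact mul_le_mul (le_max_left _ _) (max_le_max (le_max_left _ _) (le_max_left _ _))
      (by positivity) weightedNormConst_pos.le
  · exact mul_le_mul (le_max_right _ _) (max_le_max (le_max_right _ _) (le_max_right _ _))
      (by positivity) weightedNormConst_pos.le

end WeightedNorm

def approxSet (i j : ℝ) (X : 𝕋²) (φ : ℕ → ℝ) (q : ℕ) : Set 𝕋² :=
  {γ | weightedNorm i j (q • X - γ) ≤ φ q}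

section ApproxSet

variable {i j : ℝ} {X : 𝕋²} {φ : ℕ → ℝ}

theorem approxSet_eq_prod (hi : 0 < i) (hj : 0 < j) {q : ℕ} (hφ : 0 ≤ φ q) :
    approxSet i j X φ q =
      Metric.closedBall (q • X).1 (φ q ^ i) ×ˢ Metric.closedBall (q • X).2 (φ q ^ j) := by
  ext γ
  simp [approxSet, weightedNorm_le_iff hi hj hφ, dist_eq_norm, norm_sub_rev]

theorem measurableSet_approxSet (hi : 0 < i) (hj : 0 < j) (hφ : ∀ q, 0 ≤ φ q) (q : ℕ) :
    MeasurableSet (approxSet i j X φ q) := by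
  rw [approxSet_eq_prod hi hj (hφ q)]
  exact measurableSet_closedBall.prod measurableSet_closedBall

theorem volume_approxSet (hi : 0 < i) (hj : 0 < j) (hij : i + j = 1) {q : ℕ} (hφ : 0 ≤ φ q)
    (hφi : 2 * φ q ^ i ≤ 1) (hφj : 2 * φ q ^ j ≤ 1) :
    volume (approxSet i j X φ q) = ENNReal.ofReal (4 * φ q) := by
  rw [approxSet_eq_prod hi hj hφ, Measure.volume_eq_prod, Measure.prod_prod,
    AddCircle.volume_closedBall, AddCircle.volume_closedBall, min_eq_right hφi,
    min_eq_right hφj, ← ENNReal.ofReal_mul (by positivity)]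
  have h : φ q ^ i * φ q ^ j = φ q := by
    rw [← Real.rpow_add' hφ (by rw [hij]; exact one_ne_zero), hij, Real.rpow_one]
  congr 1
  linear_combination 4 * h

theorem nsmul_mem_approxSet (hi : 0 < i) (hj : 0 < j) {q : ℕ} (hφ : 0 ≤ φ q) :
    q • X ∈ approxSet i j X φ q := by
  simp [approxSet, weightedNorm_le_iff hi hj hφ, Real.rpow_nonneg hφ]

end ApproxSet

def IsBadlyApproximable (i j : ℝ) (X : 𝕋²) : Prop :=
  ∃ c > 0, ∀ m : ℕ, 0 < m → c / m < weightedNorm i j (m • X)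

section Separation

variable {i j : ℝ} {X : 𝕋²} {φ : ℕ → ℝ}

theorem weightedNorm_nsmul_sub_nsmul_le (hi : 0 < i) (hj : 0 < j) (hφ : Antitone φ) {q r : ℕ}
    (hqr : q ≤ r) (hγ : (approxSet i j X φ q ∩ approxSet i j X φ r).Nonempty) :
    weightedNorm i j (r • X - q • X) ≤ weightedNormConst i j * φ q := by
  obtain ⟨γ, hγq, hγr⟩ := hγ
  calc weightedNorm i j (r • X - q • X) = weightedNorm i j ((r • X - γ) - (q • X - γ)) := by
        rw [sub_sub_sub_cancel_right]
    _ ≤ weightedNormConst i j * max (φ r) (φ q) :=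
        (weightedNorm_sub_le hi hj _ _).trans
          (mul_le_mul_of_nonneg_left (max_le_max hγr hγq) weightedNormConst_pos.le)
    _ = weightedNormConst i j * φ q := by rw [max_eq_right (hφ hqr)]

theorem div_lt_natCast_sub_of_inter_nonempty (hi : 0 < i) (hj : 0 < j) {c : ℝ}
    (hbad : ∀ m : ℕ, 0 < m → c / m < weightedNorm i j (m • X)) (hφ : Antitone φ)
    (hφpos : ∀ q, 0 < φ q) {q a b : ℕ} (ha : q ≤ a) (hab : a < b)
    (hqa : (approxSet i j X φ q ∩ approxSet i j X φ a).Nonempty)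
    (hqb : (approxSet i j X φ q ∩ approxSet i j X φ b).Nonempty) :
    c / (weightedNormConst i j ^ 2 * φ q) < ((b - a : ℕ) : ℝ) := by
  have hK := weightedNormConst_pos (i := i) (j := j)
  have hsep : weightedNorm i j ((b - a) • X) ≤ weightedNormConst i j ^ 2 * φ q :=
    calc weightedNorm i j ((b - a) • X)
          = weightedNorm i j ((b • X - q • X) - (a • X - q • X)) := by
          rw [sub_nsmul X hab.le, sub_sub_sub_cancel_right, sub_eq_add_neg]
      _ ≤ weightedNormConst i j * (weightedNormConst i j * φ q) :=
          (weightedNorm_sub_le hi hj _ _).trans <| mul_le_mul_of_nonneg_left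
            (max_le (weightedNorm_nsmul_sub_nsmul_le hi hj hφ (ha.trans hab.le) hqb)
              (weightedNorm_nsmul_sub_nsmul_le hi hj hφ ha hqa)) hK.le
      _ = weightedNormConst i j ^ 2 * φ q := by ring
  rw [div_lt_comm₀ (mul_pos (pow_pos hK 2) (hφpos q)) (by simpa using hab)]
  exact (hbad _ (Nat.sub_pos_of_lt hab)).trans_le hsep

end Separation

section QuasiIndependence

variable {i j c : ℝ} {X : 𝕋²} {φ : ℕ → ℝ}

theorem sum_volume_inter_approxSet_le (hi : 0 < i) (hj : 0 < j) (hij : i + j = 1) (hc : 0 < c)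
    (hbad : ∀ m : ℕ, 0 < m → c / m < weightedNorm i j (m • X)) (hφpos : ∀ q, 0 < φ q)
    (hφ : Antitone φ) (hφi : ∀ q, 2 * φ q ^ i ≤ 1) (hφj : ∀ q, 2 * φ q ^ j ≤ 1) {M N q : ℕ}
    (hq : q ∈ Finset.Ico M N) :
    ∑ r ∈ Finset.Ico M N with q ≤ r,
        volume (approxSet i j X φ q ∩ approxSet i j X φ r) ≤
      volume (approxSet i j X φ q) *
        (1 + ENNReal.ofReal (weightedNormConst i j ^ 2 / (4 * c)) *
          ∑ r ∈ Finset.Ico M N, volume (approxSet i j X φ r)) := by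
  classical
  set A := approxSet i j X φ
  set K := weightedNormConst i j
  have hK : 0 < K := weightedNormConst_pos
  have hvol : ∀ r, volume (A r) = ENNReal.ofReal (4 * φ r) := fun r =>
    volume_approxSet hi hj hij (hφpos r).le (hφi r) (hφj r)
  have hvolanti : Antitone fun r => volume (A r) := fun a b hab => by
    simp only [hvol]; gcongr; exact hφ hab
  obtain ⟨hMq, hqN⟩ := Finset.mem_Ico.1 hq
  -- only the `r` with `A q ∩ A r ≠ ∅` contribute; they are `c / (K² φ q)`-separated
  set T := (Finset.Ico M N).filter fun r => q ≤ r ∧ (A q ∩ A r).Nonempty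
  have hqT : q ∈ T := Finset.mem_filter.2 ⟨hq, le_rfl, by
    simpa using ⟨_, nsmul_mem_approxSet hi hj (hφpos q).le⟩⟩
  have hT : ∀ r ∈ T, q ≤ r ∧ r < N ∧ (A q ∩ A r).Nonempty := fun r hr => by
    obtain ⟨hr, hqr, hne⟩ := Finset.mem_filter.1 hr
    exact ⟨hqr, (Finset.mem_Ico.1 hr).2, hne⟩
  set D := ENNReal.ofReal (c / (K ^ 2 * φ q))
  have hD0 : D ≠ 0 := by simpa [D] using div_pos hc (mul_pos (pow_pos hK 2) (hφpos q))
  have hgap : D * ∑ r ∈ T.erase q, volume (A r) ≤ ∑ r ∈ Finset.Ico q N, volume (A r) := by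
    refine hvolanti.mul_sum_le_sum_Ico_of_gap _ q (fun b hb => ?_) fun a ha b hb hab => ?_
    · obtain ⟨hbq, hbT⟩ := Finset.mem_erase.1 hb
      exact ⟨lt_of_le_of_ne (hT b hbT).1 (Ne.symm hbq), (hT b hbT).2.1.le⟩
    · rw [Finset.insert_erase hqT] at ha
      rw [← ENNReal.ofReal_natCast]
      exact ENNReal.ofReal_le_ofReal (div_lt_natCast_sub_of_inter_nonempty hi hj hbad hφ hφpos
        (hT a ha).1 hab (hT a ha).2.2 (hT b (Finset.mem_of_mem_erase hb)).2.2).le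
  have hDinv : D⁻¹ = ENNReal.ofReal (K ^ 2 / (4 * c)) * volume (A q) := by
    rw [hvol, ← ENNReal.ofReal_mul (by positivity), ← ENNReal.ofReal_inv_of_pos
      (div_pos hc (mul_pos (pow_pos hK 2) (hφpos q)))]
    congr 1
    field_simp
  calc ∑ r ∈ Finset.Ico M N with q ≤ r, volume (A q ∩ A r)
      = ∑ r ∈ T, volume (A q ∩ A r) := by
        rw [show T = _ from (Finset.filter_filter _ _ _).symm]
        exact (Finset.sum_filter_of_ne fun r _ h => nonempty_of_measure_ne_zero h).symm
    _ ≤ ∑ r ∈ T, volume (A r) := Finset.sum_le_sum fun r _ => measure_mono inter_subset_right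
    _ = volume (A q) + ∑ r ∈ T.erase q, volume (A r) := (Finset.add_sum_erase _ _ hqT).symm
    _ ≤ volume (A q) + D⁻¹ * ∑ r ∈ Finset.Ico M N, volume (A r) := by
        gcongr
        refine (ENNReal.mul_le_iff_le_inv hD0 ENNReal.ofReal_ne_top).1 (hgap.trans ?_)
        exact Finset.sum_le_sum_of_subset (Finset.Ico_subset_Ico_left hMq)
    _ = _ := by rw [hDinv, mul_add, mul_one, mul_assoc, mul_left_comm]

theorem volume_limsup_approxSet_ne_zero (hi : 0 < i) (hj : 0 < j) (hij : i + j = 1) (hc : 0 < c)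
    (hbad : ∀ m : ℕ, 0 < m → c / m < weightedNorm i j (m • X)) (hφpos : ∀ q, 0 < φ q)
    (hφ : Antitone φ) (hφdiv : ¬ Summable φ) (hφi : ∀ q, 2 * φ q ^ i ≤ 1)
    (hφj : ∀ q, 2 * φ q ^ j ≤ 1) :
    volume (limsup (approxSet i j X φ) atTop) ≠ 0 := by
  set A := approxSet i j X φ
  set β := ENNReal.ofReal (weightedNormConst i j ^ 2 / (4 * c))
  have hvol : ∀ r, volume (A r) = ENNReal.ofReal (4 * φ r) := fun r =>
    volume_approxSet hi hj hij (hφpos r).le (hφi r) (hφj r)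
  have hdiv : ∑' q, volume (A q) = ∞ := by
    by_contra h
    refine hφdiv ((ENNReal.summable_toReal h).div_const 4 |>.congr fun q => ?_)
    rw [hvol, ENNReal.toReal_ofReal (by linarith [hφpos q])]
    ring
  have hC : ∀ M N, 1 ≤ ∑ q ∈ Finset.Ico M N, volume (A q) →
      ∑ q ∈ Finset.Ico M N, ∑ r ∈ Finset.Ico M N, volume (A q ∩ A r) ≤
        2 * (1 + β) * (∑ q ∈ Finset.Ico M N, volume (A q)) ^ 2 := by
    intro M N hS
    set S := ∑ q ∈ Finset.Ico M N, volume (A q)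
    calc ∑ q ∈ Finset.Ico M N, ∑ r ∈ Finset.Ico M N, volume (A q ∩ A r)
        ≤ 2 * ∑ q ∈ Finset.Ico M N, ∑ r ∈ Finset.Ico M N with q ≤ r, volume (A q ∩ A r) :=
          ENNReal.sum_sum_le_two_mul_sum_sum_le _ fun q r => by rw [inter_comm]
      _ ≤ 2 * ∑ q ∈ Finset.Ico M N, volume (A q) * (1 + β * S) := by
          gcongr with q hq
          exact sum_volume_inter_approxSet_le hi hj hij hc hbad hφpos hφ hφi hφj hq
      _ = 2 * (S + β * S * S) := by rw [← Finset.sum_mul]; ring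
      _ ≤ 2 * (S * S + β * S * S) := by gcongr; exact le_mul_of_one_le_left' hS
      _ = 2 * (1 + β) * S ^ 2 := by ring
  have hlim := inv_le_measure_limsup_of_sum_inter_le
    (measurableSet_approxSet hi hj fun q => (hφpos q).le) hdiv hC
  refine (lt_of_lt_of_le (ENNReal.inv_pos.2 ?_) hlim).ne'
  exact ENNReal.mul_ne_top ENNReal.ofNat_ne_top
    (ENNReal.add_ne_top.2 ⟨ENNReal.one_ne_top, ENNReal.ofReal_ne_top⟩)

instance : (volume : Measure 𝕋²).IsAddLeftInvariant := by
  rw [Measure.volume_eq_prod]; infer_instance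

instance : IsProbabilityMeasure (volume : Measure 𝕋²) :=
  ⟨by simp [Measure.volume_eq_prod, ← univ_prod_univ, Measure.prod_prod]⟩

theorem approxSet_succ_subset_preimage (hφ : Antitone φ) (q : ℕ) :
    approxSet i j X φ (q + 1) ⊆ (-X + ·) ⁻¹' approxSet i j X φ q := fun γ hγ => by
  refine le_trans (le_of_eq ?_) (hγ.trans (hφ q.le_succ))
  rw [sub_add_eq_sub_sub, sub_neg_eq_add, succ_nsmul]

theorem volume_limsup_approxSet_eq_one_of_le (hi : 0 < i) (hj : 0 < j) (hij : i + j = 1)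
    (hX : DenseRange (fun n : ℤ => n • X)) (hc : 0 < c)
    (hbad : ∀ m : ℕ, 0 < m → c / m < weightedNorm i j (m • X)) (hφpos : ∀ q, 0 < φ q)
    (hφ : Antitone φ) (hφdiv : ¬ Summable φ) (hφi : ∀ q, 2 * φ q ^ i ≤ 1)
    (hφj : ∀ q, 2 * φ q ^ j ≤ 1) :
    volume (limsup (approxSet i j X φ) atTop) = 1 := by
  have herg : Ergodic (-X + ·) (volume : Measure 𝕋²) := by
    refine ergodic_add_left_of_denseRange_zsmul (hX.mono ?_) _
    rintro _ ⟨n, rfl⟩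
    exact ⟨-n, by simp⟩
  exact herg.measure_eq_one_of_subset_preimage
    (MeasurableSet.measurableSet_limsup
      (measurableSet_approxSet hi hj fun q => (hφpos q).le)).nullMeasurableSet
    (limsup_subset_preimage_limsup (approxSet_succ_subset_preimage hφ))
    (volume_limsup_approxSet_ne_zero hi hj hij hc hbad hφpos hφ hφdiv hφi hφj)

end QuasiIndependence

theorem not_summable_min_of_not_summable {ψ : ℕ → ℝ} (hψ : ¬ Summable ψ) {m : ℝ} (hm : 0 < m) :
    ¬ Summable fun q => min (ψ q) m := fun hs =>
  hψ <| hs.congr_atTop <| (hs.tendsto_atTop_zero.eventually (gt_mem_nhds hm)).mono fun _ hq =>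
    min_eq_left ((min_lt_iff.1 hq).resolve_right (lt_irrefl m)).le

theorem volume_limsup_approxSet_eq_one {i j : ℝ} (hi : 0 < i) (hj : 0 < j) (hij : i + j = 1)
    {X : 𝕋²} (hX : DenseRange (fun n : ℤ => n • X)) (hbad : IsBadlyApproximable i j X)
    {ψ : ℕ → ℝ} (hψpos : ∀ q, 0 < ψ q) (hψ : Antitone ψ) (hψdiv : ¬ Summable ψ) :
    volume (limsup (approxSet i j X ψ) atTop) = 1 := by
  obtain ⟨c, hc, hbad⟩ := hbad
  -- cap `ψ` so that the approximating rectangles have side lengths at most `1`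
  set m := min ((1 / 2 : ℝ) ^ i⁻¹) ((1 / 2) ^ j⁻¹)
  have hm : 0 < m := lt_min (by positivity) (by positivity)
  set φ := fun q => min (ψ q) m
  have hφpos : ∀ q, 0 < φ q := fun q => lt_min (hψpos q) hm
  have hcap : ∀ {e : ℝ}, 0 < e → m ≤ (1 / 2) ^ e⁻¹ → ∀ q, 2 * φ q ^ e ≤ 1 := fun he hme q => by
    have := (Real.le_rpow_inv_iff_of_pos (hφpos q).le (by norm_num) he).1
      ((min_le_right _ _).trans hme)
    linarith
  have hφ := volume_limsup_approxSet_eq_one_of_le hi hj hij hX hc hbad hφpos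
    (fun _ _ h => min_le_min_right _ (hψ h)) (not_summable_min_of_not_summable hψdiv hm)
    (hcap hi (min_le_left _ _)) (hcap hj (min_le_right _ _))
  refine le_antisymm prob_le_one (hφ ▸ measure_mono fun γ hγ => ?_)
  rw [mem_limsup_iff_frequently_mem] at hγ ⊢
  exact hγ.mono fun q (hq : _ ≤ φ q) => (hq.trans (min_le_left _ _) : _ ≤ ψ q)

theorem weightedNorm_toTorus {i j : ℝ} (hi : i ≠ 0) (hj : j ≠ 0) (p : ℝ × ℝ) :
    weightedNorm i j (toTorus p) = max (pw (nint p.1) i) (pw (nint p.2) j) := by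
  simp [weightedNorm, pw, hi, hj, nint, toTorus_apply, UnitAddCircle.norm_eq]

theorem Badij.isBadlyApproximable {i j : ℝ} (hi : i ≠ 0) (hj : j ≠ 0) {x : ℝ × ℝ}
    (hx : Badij i j x) : IsBadlyApproximable i j (toTorus x) := by
  obtain ⟨-, c, hc, hbad⟩ := hx
  refine ⟨c, hc, fun m hm => ?_⟩
  rw [← map_nsmul, weightedNorm_toTorus hi hj]
  simpa [nsmul_eq_mul] using hbad m hm

theorem mem_twistedW_of_mem_limsup {i j : ℝ} (hi : i ≠ 0) (hj : j ≠ 0) {x γ : ℝ × ℝ}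
    {ψ : ℕ → ℝ} (hγ : γ ∈ Icc 0 1)
    (hlim : toTorus γ ∈ limsup (approxSet i j (toTorus x) ψ) atTop) :
    γ ∈ twistedW x i j ψ := by
  refine ⟨hγ, Infinite.mono ?_ (((Nat.frequently_atTop_iff_infinite.1
    (mem_limsup_iff_frequently_mem.1 hlim)).sdiff (finite_singleton 0)).image
    (Nat.cast_injective.injOn (β := ℤ)))⟩
  rintro _ ⟨n, ⟨hn, hn0⟩, rfl⟩
  refine ⟨by simpa using hn0, ?_⟩
  have hn' : weightedNorm i j (toTorus (n • x - γ)) ≤ ψ n := by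
    rw [map_sub, map_nsmul]
    exact hn
  rw [weightedNorm_toTorus hi hj] at hn'
  simpa [nsmul_eq_mul] using hn'

theorem volume_twistedW_eq_one {i j : ℝ} (hi : 0 < i) (hj : 0 < j) {x : ℝ × ℝ} {ψ : ℕ → ℝ}
    (hψ : ∀ q, 0 ≤ ψ q) (h : volume (limsup (approxSet i j (toTorus x) ψ) atTop) = 1) :
    volume (twistedW x i j ψ) = 1 := by
  set E := limsup (approxSet i j (toTorus x) ψ) atTop
  have hmp :
      MeasurePreserving toTorus (volume.restrict (Ioc (0 : ℝ) 1 ×ˢ Ioc (0 : ℝ) 1)) volume := by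
    have h1 := AddCircle.measurePreserving_mk 1 0
    rw [zero_add] at h1
    rw [Measure.volume_eq_prod, ← Measure.prod_restrict, Measure.volume_eq_prod]
    exact h1.prod h1
  have hIcc : volume (Icc (0 : ℝ × ℝ) 1) = 1 := by
    rw [← Icc_prod_Icc, Measure.volume_eq_prod, Measure.prod_prod]
    simp
  refine le_antisymm (hIcc ▸ measure_mono (sep_subset _ _)) ?_
  calc 1 = volume (toTorus ⁻¹' E ∩ Ioc (0 : ℝ) 1 ×ˢ Ioc (0 : ℝ) 1) := by
        rw [← Measure.restrict_apply' ((measurableSet_Ioc).prod measurableSet_Ioc),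
          hmp.measure_preimage (MeasurableSet.measurableSet_limsup
          (measurableSet_approxSet hi hj hψ)).nullMeasurableSet, h]
    _ ≤ volume (twistedW x i j ψ) := measure_mono fun γ ⟨hγE, hγ1, hγ2⟩ =>
        mem_twistedW_of_mem_limsup hi.ne' hj.ne' ⟨⟨hγ1.1.le, hγ2.1.le⟩, ⟨hγ1.2, hγ2.2⟩⟩ hγE

theorem stmt11 (i j : ℝ) (hi : 0 < i) (hj : 0 < j) (hij : i + j = 1)
    (x : ℝ × ℝ) (hx : Badij i j x) (ψ : ℕ → ℝ) (hpos : ∀ r, 0 < ψ r)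
    (hanti : Antitone ψ) (hdiv : ¬ Summable ψ) :
    volume (twistedW x i j ψ) = 1 :=
  volume_twistedW_eq_one hi hj (fun q => (hpos q).le) <|
    volume_limsup_approxSet_eq_one hi hj hij (denseRange_zsmul_toTorus hx.1)
      (hx.isBadlyApproximable hi.ne' hj.ne') hpos hanti hdiv
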